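/- Let X be a compact metric space, f : X → 2^X an open set-valued map, and C ⊆ X a nonempty connected open set with f(C) ⊆ C. If the restriction of f to C is transitive (for all nonempty open A, B ⊆ C there exists n with fⁿ(A) ∩ B ≠ ∅), then the restriction of f to C is mixing (there exists n₀ with fⁿ(A) ∩ B ≠ ∅ for all n ≥ n₀). -/

import Mathlib

open Metric Set

/-- n-fold relational composition: `fIter f 0 x = {x}`, `fIter f (n+1) x = ⋃ y ∈ fIter f n x, f y`. -/
def fIter {X : Type*} (f : X → Set X) : ℕ → X → Set X
  | 0, x => {x}
  | n + 1, x => ⋃ y ∈ fIter f n x, f y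

/-- Image of a set under the n-fold composition. -/
def fIterS {X : Type*} (f : X → Set X) (n : ℕ) (A : Set X) : Set X :=
  ⋃ a ∈ A, fIter f n a

/-- `x ⇝ y`: there is a finite trajectory of length ≥ 1 from `x` to `y`. -/
def Reach {X : Type*} (f : X → Set X) (x y : X) : Prop :=
  ∃ n, 1 ≤ n ∧ y ∈ fIter f n x

/-- The recurrent set `Ω(f)`. -/
def Omega {X : Type*} (f : X → Set X) : Set X := {x | Reach f x x}

/-- The final recurrent set `Ω_final(f)`. -/
def OmegaFinal {X : Type*} (f : X → Set X) : Set X :=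
  {x | ∀ y, Reach f x y → Reach f y x}

/-- `f` is an open set-valued map: open graph and nonempty open connected values. -/
def IsOpenSVM {X : Type*} [TopologicalSpace X] (f : X → Set X) : Prop :=
  IsOpen {p : X × X | p.2 ∈ f p.1} ∧ ∀ x, IsOpen (f x) ∧ IsConnected (f x)

/-- `f` is transitive. -/
def SVMTransitive {X : Type*} [TopologicalSpace X] (f : X → Set X) : Prop :=
  ∀ A B : Set X, IsOpen A → A.Nonempty → IsOpen B → B.Nonempty →
    ∃ n, 1 ≤ n ∧ (fIterS f n A ∩ B).Nonempty


/-!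
Transitivity and the openness of the graphs give an open set `W ⊆ C` and a time `N` such that
every point of `W` reaches every point of `W` in exactly `N` steps. The return times of `W` form
an additive submonoid `S` of `ℕ`, and the times at which a point `x ∈ C` hits `W` all agree
modulo `d = gcd S`: near `x` lies a point of some `f^m(W)`, and following it through two hitting
times produces two elements of `S`. This phase is locally constant, hence constant on the
connected set `C`; but the phases of `w ∈ W` and of a point of `f w` differ by one. So `d = 1`,
`S` contains all large integers, and any `A` reaches any `B` through `W` at all large times.
-/

section

variable {X : Type*} {f : X → Set X} {W : Set X} {N : ℕ}

lemma fIter_one (f : X → Set X) (x : X) : fIter f 1 x = f x := by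
  simp [fIter]

lemma mem_fIter_succ {n : ℕ} {x z : X} :
    z ∈ fIter f (n + 1) x ↔ ∃ y ∈ fIter f n x, z ∈ f y := by
  simp [fIter]

lemma mem_fIterS {n : ℕ} {A : Set X} {z : X} :
    z ∈ fIterS f n A ↔ ∃ a ∈ A, z ∈ fIter f n a := by
  simp [fIterS]

lemma mem_fIter_add {m : ℕ} {x y : X} (hy : y ∈ fIter f m x) :
    ∀ {n : ℕ} {z : X}, z ∈ fIter f n y → z ∈ fIter f (m + n) x
  | 0, _, hz => by rwa [(mem_singleton_iff.1 hz : _ = y)]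
  | n + 1, _, hz => by
    obtain ⟨u, hu, hzu⟩ := mem_fIter_succ.1 hz
    exact mem_fIter_succ.2 ⟨u, mem_fIter_add hy hu, hzu⟩

variable (f) in
def hittingTimes (W : Set X) (x : X) : Set ℕ :=
  {n | 1 ≤ n ∧ (fIter f n x ∩ W).Nonempty}

variable (f) in
def returnTimes (W : Set X) : AddSubmonoid ℕ where
  carrier := {n | ∀ w ∈ W, (fIter f n w ∩ W).Nonempty}
  zero_mem' := fun w hw => ⟨w, rfl, hw⟩
  add_mem' := fun {m n} hm hn w hw => by
    obtain ⟨u, hu, huW⟩ := hm w hw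
    obtain ⟨v, hv, hvW⟩ := hn u huW
    exact ⟨v, mem_fIter_add hu hv, hvW⟩

lemma one_add_mem_hittingTimes {x y : X} (hy : y ∈ f x) {k : ℕ}
    (hk : k ∈ hittingTimes f W y) : 1 + k ∈ hittingTimes f W x := by
  obtain ⟨-, z, hz, hzW⟩ := hk
  exact ⟨by omega, z, mem_fIter_add (by rwa [fIter_one]) hz, hzW⟩

lemma add_add_mem_returnTimes (hW : ∀ w ∈ W, W ⊆ fIter f N w) {m n : ℕ} {w₀ v : X}
    (hw₀ : w₀ ∈ W) (hv : v ∈ fIter f m w₀) (hn : n ∈ hittingTimes f W v) :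
    N + m + n ∈ returnTimes f W := by
  intro w hw
  obtain ⟨-, z, hz, hzW⟩ := hn
  exact ⟨z, mem_fIter_add (mem_fIter_add (hW w hw hw₀) hv) hz, hzW⟩

lemma AddSubmonoid.exists_forall_ge_mem_of_setGcd_eq_one (S : AddSubmonoid ℕ)
    (hS : Nat.setGcd S = 1) : ∃ n₀, ∀ n ≥ n₀, n ∈ S := by
  obtain ⟨n₀, hn₀⟩ := Nat.exists_mem_closure_of_ge (S : Set ℕ)
  exact ⟨n₀, fun n hn => S.closure_eq ▸ hn₀ n hn (hS ▸ one_dvd n)⟩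

section Topology

variable [TopologicalSpace X] {C : Set X}

lemma IsPreconnected.apply_eq_apply_of_isOpen_setOf_mem {α β : Type*} (hC : IsPreconnected C)
    {H : X → Set α} (φ : α → β)
    (hH : ∀ a, IsOpen {x | a ∈ H x}) (hne : ∀ x ∈ C, (H x).Nonempty)
    (hφ : ∀ x ∈ C, ∀ a ∈ H x, ∀ b ∈ H x, φ a = φ b) {x y : X} (hx : x ∈ C) (hy : y ∈ C)
    {a b : α} (ha : a ∈ H x) (hb : b ∈ H y) : φ a = φ b := by
  refine hC.induction₂' (fun x y => ∀ a ∈ H x, ∀ b ∈ H y, φ a = φ b) (fun x hx => ?_)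
    (fun x y z _ hy _ hxy hyz a ha b hb => ?_) hx hy a ha b hb
  · obtain ⟨c, hc⟩ := hne x hx
    filter_upwards [mem_nhdsWithin_of_mem_nhds ((hH c).mem_nhds hc), self_mem_nhdsWithin]
      with y hcy hy
    exact ⟨fun a ha b hb => (hφ x hx a ha c hc).trans (hφ y hy c hcy b hb),
      fun a ha b hb => (hφ y hy a ha c hcy).trans (hφ x hx c hc b hb)⟩
  · obtain ⟨c, hc⟩ := hne y hy
    exact (hxy a ha c hc).trans (hyz c hc b hb)

lemma isOpen_graph_fIter (hf : IsOpen {p : X × X | p.2 ∈ f p.1}) {n : ℕ} (hn : 1 ≤ n) :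
    IsOpen {p : X × X | p.2 ∈ fIter f n p.1} := by
  induction n, hn using Nat.le_induction with
  | base => simpa only [fIter_one] using hf
  | succ n _ ih =>
    have hgraph : {p : X × X | p.2 ∈ fIter f (n + 1) p.1} =
        ⋃ y, {x | y ∈ fIter f n x} ×ˢ f y := by
      ext ⟨x, z⟩
      simp [mem_fIter_succ]
    rw [hgraph]
    exact isOpen_iUnion fun y =>
      (ih.preimage (.prodMk_left y)).prod (hf.preimage (.prodMk_right y))

lemma isOpen_setOf_mem_fIter (hf : IsOpen {p : X × X | p.2 ∈ f p.1}) {n : ℕ} (hn : 1 ≤ n)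
    (y : X) : IsOpen {x | y ∈ fIter f n x} :=
  (isOpen_graph_fIter hf hn).preimage (.prodMk_left y)

lemma isOpen_setOf_mem_hittingTimes (hf : IsOpen {p : X × X | p.2 ∈ f p.1}) (W : Set X)
    (n : ℕ) : IsOpen {x | n ∈ hittingTimes f W x} := by
  rcases n.eq_zero_or_pos with rfl | (hn : 1 ≤ n)
  · simp [hittingTimes]
  · have hset : {x | n ∈ hittingTimes f W x} = ⋃ w ∈ W, {x | w ∈ fIter f n x} := by
      ext x
      simp [hittingTimes, hn, Set.Nonempty, and_comm]
    rw [hset]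
    exact isOpen_biUnion fun w _ => isOpen_setOf_mem_fIter hf hn w

variable (f) in
def SVMTransitiveOn (C : Set X) : Prop :=
  ∀ A B : Set X, A ⊆ C → B ⊆ C → IsOpen A → A.Nonempty → IsOpen B → B.Nonempty →
    ∃ n, 1 ≤ n ∧ (fIterS f n A ∩ B).Nonempty

variable (f) in
def SVMMixingOn (C : Set X) : Prop :=
  ∀ A B : Set X, A ⊆ C → B ⊆ C → IsOpen A → A.Nonempty → IsOpen B → B.Nonempty →
    ∃ n₀, ∀ n ≥ n₀, (fIterS f n A ∩ B).Nonempty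

lemma SVMTransitiveOn.exists_mem_fIter (ht : SVMTransitiveOn f C) {A B : Set X} (hAC : A ⊆ C)
    (hBC : B ⊆ C) (hA : IsOpen A) (hAne : A.Nonempty) (hB : IsOpen B) (hBne : B.Nonempty) :
    ∃ n, 1 ≤ n ∧ ∃ a ∈ A, ∃ b ∈ B, b ∈ fIter f n a := by
  obtain ⟨n, hn, b, hbn, hb⟩ := ht A B hAC hBC hA hAne hB hBne
  obtain ⟨a, ha, hab⟩ := mem_fIterS.1 hbn
  exact ⟨n, hn, a, ha, b, hb, hab⟩

lemma SVMTransitiveOn.exists_uniform_return (ht : SVMTransitiveOn f C)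
    (hf : IsOpen {p : X × X | p.2 ∈ f p.1}) (hC : IsOpen C) (hCne : C.Nonempty) :
    ∃ (W : Set X) (N : ℕ), IsOpen W ∧ W.Nonempty ∧ W ⊆ C ∧ ∀ w ∈ W, W ⊆ fIter f N w := by
  obtain ⟨n₁, hn₁, a, ha, z, hz, haz⟩ := ht.exists_mem_fIter subset_rfl subset_rfl hC hCne hC hCne
  obtain ⟨U, V, hU, hV, haU, hzV, hUV⟩ := isOpen_prod_iff.1 (isOpen_graph_fIter hf hn₁) a z haz
  obtain ⟨n₂, hn₂, p, ⟨hpV, hpC⟩, q, ⟨hqU, -⟩, hpq⟩ := ht.exists_mem_fIter inter_subset_right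
    inter_subset_right (hV.inter hC) ⟨z, hzV, hz⟩ (hU.inter hC) ⟨a, haU, ha⟩
  obtain ⟨U', V', hU', hV', hpU', hqV', hUV'⟩ :=
    isOpen_prod_iff.1 (isOpen_graph_fIter hf hn₂) p q hpq
  -- `w ∈ U'` reaches `q ∈ V'` in `n₂` steps, and `q ∈ U` reaches `w' ∈ V` in `n₁` steps.
  refine ⟨U' ∩ (V ∩ C), n₂ + n₁, hU'.inter (hV.inter hC), ⟨p, hpU', hpV, hpC⟩,
    inter_subset_right.trans inter_subset_right, ?_⟩
  rintro w ⟨hwU', -⟩ w' ⟨-, hw'V, -⟩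
  exact mem_fIter_add (hUV' (mk_mem_prod hwU' hqV')) (hUV (mk_mem_prod hqU hw'V))

lemma SVMTransitiveOn.hittingTimes_nonempty (ht : SVMTransitiveOn f C)
    (hf : IsOpen {p : X × X | p.2 ∈ f p.1}) (hne : ∀ x, (f x).Nonempty)
    (hfC : ∀ x ∈ C, f x ⊆ C) (hWo : IsOpen W) (hWne : W.Nonempty) (hWC : W ⊆ C) {x : X}
    (hx : x ∈ C) : (hittingTimes f W x).Nonempty := by
  obtain ⟨m, hm, y, hy, z, hzW, hyz⟩ :=
    ht.exists_mem_fIter (hfC x hx) hWC (hf.preimage (.prodMk_right x)) (hne x) hWo hWne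
  exact ⟨1 + m, one_add_mem_hittingTimes hy ⟨hm, z, hyz, hzW⟩⟩

lemma SVMTransitiveOn.modEq_of_mem_hittingTimes (ht : SVMTransitiveOn f C)
    (hf : IsOpen {p : X × X | p.2 ∈ f p.1}) (hC : IsOpen C) (hWo : IsOpen W)
    (hWne : W.Nonempty) (hWC : W ⊆ C) (hW : ∀ w ∈ W, W ⊆ fIter f N w) {x : X} (hx : x ∈ C)
    {n n' : ℕ} (hn : n ∈ hittingTimes f W x) (hn' : n' ∈ hittingTimes f W x) :
    n ≡ n' [MOD Nat.setGcd (returnTimes f W)] := by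
  have hU : IsOpen ({y | n ∈ hittingTimes f W y} ∩ {y | n' ∈ hittingTimes f W y} ∩ C) :=
    ((isOpen_setOf_mem_hittingTimes hf W n).inter
      (isOpen_setOf_mem_hittingTimes hf W n')).inter hC
  obtain ⟨m, -, w₀, hw₀, v, ⟨⟨hvn, hvn'⟩, -⟩, hv⟩ :=
    ht.exists_mem_fIter hWC inter_subset_right hWo hWne hU ⟨x, ⟨hn, hn'⟩, hx⟩
  have hzero : ∀ k ∈ hittingTimes f W v, N + m + k ≡ 0 [MOD Nat.setGcd (returnTimes f W)] :=
    fun k hk => Nat.modEq_zero_iff_dvd.2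
      (Nat.setGcd_dvd_of_mem (add_add_mem_returnTimes hW hw₀ hv hk))
  exact Nat.ModEq.add_left_cancel' (N + m) ((hzero n hvn).trans (hzero n' hvn').symm)

lemma SVMTransitiveOn.setGcd_returnTimes_eq_one (ht : SVMTransitiveOn f C)
    (hf : IsOpen {p : X × X | p.2 ∈ f p.1}) (hne : ∀ x, (f x).Nonempty)
    (hfC : ∀ x ∈ C, f x ⊆ C) (hC : IsOpen C) (hCconn : IsPreconnected C) (hWo : IsOpen W)
    (hWne : W.Nonempty) (hWC : W ⊆ C) (hW : ∀ w ∈ W, W ⊆ fIter f N w) :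
    Nat.setGcd (returnTimes f W) = 1 := by
  obtain ⟨w, hw⟩ := hWne
  obtain ⟨y, hy⟩ := hne w
  have hyC : y ∈ C := hfC w (hWC hw) hy
  obtain ⟨k, hk⟩ := ht.hittingTimes_nonempty hf hne hfC hWo ⟨w, hw⟩ hWC hyC
  have hshift : 1 + k ≡ 0 + k [MOD Nat.setGcd (returnTimes f W)] := by
    rw [zero_add]
    exact hCconn.apply_eq_apply_of_isOpen_setOf_mem (· % Nat.setGcd (returnTimes f W))
      (isOpen_setOf_mem_hittingTimes hf W)
      (fun x hx => ht.hittingTimes_nonempty hf hne hfC hWo ⟨w, hw⟩ hWC hx)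
      (fun x hx a ha b hb => ht.modEq_of_mem_hittingTimes hf hC hWo ⟨w, hw⟩ hWC hW hx ha hb)
      (hWC hw) hyC (one_add_mem_hittingTimes hy hk) hk
  exact Nat.dvd_one.1 (Nat.modEq_zero_iff_dvd.1 (Nat.ModEq.add_right_cancel' k hshift))

lemma SVMTransitiveOn.mixingOn (ht : SVMTransitiveOn f C) (hWo : IsOpen W)
    (hWne : W.Nonempty) (hWC : W ⊆ C) (hW : ∀ w ∈ W, W ⊆ fIter f N w) {n₀ : ℕ}
    (hn₀ : ∀ n ≥ n₀, n ∈ returnTimes f W) : SVMMixingOn f C := by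
  intro A B hAC hBC hA hAne hB hBne
  obtain ⟨k, -, a, ha, z, hzW, haz⟩ := ht.exists_mem_fIter hAC hWC hA hAne hWo hWne
  obtain ⟨m, -, w, hw, b, hb, hwb⟩ := ht.exists_mem_fIter hWC hBC hWo hWne hB hBne
  refine ⟨k + n₀ + N + m, fun n hn => ?_⟩
  obtain ⟨w', hw', hw'W⟩ := hn₀ (n - k - N - m) (by omega) z hzW
  have hreach := mem_fIter_add (mem_fIter_add (mem_fIter_add haz hw') (hW w' hw'W hw)) hwb
  rw [show k + (n - k - N - m) + N + m = n by omega] at hreach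
  exact ⟨b, mem_fIterS.2 ⟨a, ha, hreach⟩, hb⟩

end Topology

end

theorem stmt_15_general {X : Type*} [MetricSpace X] (f : X → Set X)
    (hf : IsOpenSVM f) (C : Set X) (hCconn : IsConnected C)
    (hCopen : IsOpen C) (hinv : (⋃ c ∈ C, f c) ⊆ C)
    (htrans : ∀ A B : Set X, A ⊆ C → B ⊆ C → IsOpen A → A.Nonempty →
      IsOpen B → B.Nonempty → ∃ n, 1 ≤ n ∧ (fIterS f n A ∩ B).Nonempty) :
    ∀ A B : Set X, A ⊆ C → B ⊆ C → IsOpen A → A.Nonempty →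
      IsOpen B → B.Nonempty → ∃ n₀, ∀ n ≥ n₀, (fIterS f n A ∩ B).Nonempty := by
  have ht : SVMTransitiveOn f C := htrans
  have hne : ∀ x, (f x).Nonempty := fun x => (hf.2 x).2.nonempty
  have hfC : ∀ x ∈ C, f x ⊆ C := fun x hx => (subset_biUnion_of_mem hx).trans hinv
  obtain ⟨W, N, hWo, hWne, hWC, hW⟩ := ht.exists_uniform_return hf.1 hCopen hCconn.nonempty
  have hgcd := ht.setGcd_returnTimes_eq_one hf.1 hne hfC hCopen hCconn.isPreconnected hWo
    hWne hWC hW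
  obtain ⟨n₀, hn₀⟩ := (returnTimes f W).exists_forall_ge_mem_of_setGcd_eq_one hgcd
  exact ht.mixingOn hWo hWne hWC hW hn₀

theorem stmt_15 {X : Type*} [MetricSpace X] [CompactSpace X] (f : X → Set X)
    (hf : IsOpenSVM f) (C : Set X) (hCne : C.Nonempty) (hCconn : IsConnected C)
    (hCopen : IsOpen C) (hinv : (⋃ c ∈ C, f c) ⊆ C)
    (htrans : ∀ A B : Set X, A ⊆ C → B ⊆ C → IsOpen A → A.Nonempty →
      IsOpen B → B.Nonempty → ∃ n, 1 ≤ n ∧ (fIterS f n A ∩ B).Nonempty) :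
    ∀ A B : Set X, A ⊆ C → B ⊆ C → IsOpen A → A.Nonempty →
      IsOpen B → B.Nonempty → ∃ n₀, ∀ n ≥ n₀, (fIterS f n A ∩ B).Nonempty :=
  stmt_15_general f hf C hCconn hCopen hinv htrans
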